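/- arXiv:2105.00936 — 2 statements merged into one kernel-verified Lean document; each statement's English description precedes it below -/
import Mathlib

section
/- For every i with 1 ≤ i ≤ n, the element w(ε_i) = s_{i−1} ∘ s_{i−2} ∘ ⋯ ∘ s_1 ∘ s_0 of GL(F) lies in the coset t(ε_i)·W_0, and it is a shortest element of that coset with respect to the generators s_0, s_1, …, s_n: whenever a composition s_{j_1} ∘ s_{j_2} ∘ ⋯ ∘ s_{j_m} (with each j_k ∈ {0, 1, …, n}) lies in t(ε_i)·W_0, one has m ≥ i. -/
noncomputable section

namespace CvC

/-- Ambient space `F = ℝⁿ ⊕ ℝc`. -/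
abbrev F (n : ℕ) := (Fin n → ℝ) × ℝ

/-- Bilinear form `⟨v + rc, w + sc⟩ = v ⬝ w`. -/
def bform (n : ℕ) (x y : F n) : ℝ := ∑ i, x.1 i * y.1 i

/-- The constant function `c`. -/
def cvec (n : ℕ) : F n := (0, 1)

/-- `eps n i` is the basis vector `ε_i`, for `1 ≤ i ≤ n` (1-based; junk value `0` out of range). -/
def eps (n i : ℕ) : F n :=
  if h : 1 ≤ i ∧ i ≤ n then (Pi.single (⟨i - 1, by omega⟩ : Fin n) 1, 0) else 0

lemma bform_add_left (n : ℕ) (x y z : F n) :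
    bform n (x + y) z = bform n x z + bform n y z := by
  simp [bform, add_mul, Finset.sum_add_distrib]

lemma bform_smul_left (n : ℕ) (c : ℝ) (x z : F n) :
    bform n (c • x) z = c * bform n x z := by
  simp [bform, Finset.mul_sum, mul_assoc]

lemma bform_sub_left (n : ℕ) (x y z : F n) :
    bform n (x - y) z = bform n x z - bform n y z := by
  simp [bform, sub_mul, Finset.sum_sub_distrib]

/-- Reflection `s_f(g) = g − ⟨g, f^∨⟩ f`, `f^∨ = (2/⟨f,f⟩) f`, as a linear endomorphism. -/
def reflMap (n : ℕ) (f : F n) : Module.End ℝ (F n) where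
  toFun g := g - ((2 / bform n f f) * bform n g f) • f
  map_add' x y := by
    try dsimp only
    rw [bform_add_left, mul_add, add_smul]; abel
  map_smul' c x := by
    try dsimp only
    simp only [RingHom.id_apply]
    rw [bform_smul_left, smul_sub, smul_smul, mul_left_comm]

@[simp] lemma reflMap_apply (n : ℕ) (f g : F n) :
    reflMap n f g = g - ((2 / bform n f f) * bform n g f) • f := rfl

lemma reflMap_invol (n : ℕ) (f : F n) (hf : bform n f f ≠ 0) (g : F n) :
    reflMap n f (reflMap n f g) = g := by
  simp only [reflMap_apply]
  rw [bform_sub_left, bform_smul_left, sub_sub, ← add_smul]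
  have key : (2 / bform n f f) * bform n g f +
      (2 / bform n f f) * (bform n g f - (2 / bform n f f) * bform n g f * bform n f f) = 0 := by
    field_simp
    ring
  rw [key, zero_smul, sub_zero]

/-- Translation `t(v)(f) = f − ⟨f, v⟩c`, as a linear endomorphism. -/
def tMap (n : ℕ) (v : Fin n → ℝ) : Module.End ℝ (F n) where
  toFun g := g - bform n g (v, 0) • cvec n
  map_add' x y := by
    try dsimp only
    rw [bform_add_left, add_smul]; abel
  map_smul' c x := by
    try dsimp only
    simp only [RingHom.id_apply]
    rw [bform_smul_left, smul_sub, smul_smul]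

@[simp] lemma tMap_apply (n : ℕ) (v : Fin n → ℝ) (g : F n) :
    tMap n v g = g - bform n g (v, 0) • cvec n := rfl

lemma bform_pair_add (n : ℕ) (g : F n) (v w : Fin n → ℝ) :
    bform n g (v + w, 0) = bform n g (v, 0) + bform n g (w, 0) := by
  simp [bform, mul_add, Finset.sum_add_distrib]

lemma tMap_mul (n : ℕ) (v w : Fin n → ℝ) :
    tMap n v * tMap n w = tMap n (v + w) := by
  apply LinearMap.ext; intro g
  rw [Module.End.mul_apply]
  simp only [tMap_apply]
  rw [bform_sub_left, bform_smul_left]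
  have hc : bform n (cvec n) (v, 0) = 0 := by simp [bform, cvec]
  rw [hc, mul_zero, sub_zero, bform_pair_add, add_smul]
  abel

lemma tMap_zero (n : ℕ) : tMap n 0 = 1 := by
  apply LinearMap.ext; intro g
  rw [Module.End.one_apply, tMap_apply]
  have h0 : bform n g ((0 : Fin n → ℝ), 0) = 0 := by simp [bform]
  rw [h0, zero_smul, sub_zero]

/-- Translation `t(v)` as an invertible endomorphism. -/
def tU (n : ℕ) (v : Fin n → ℝ) : (Module.End ℝ (F n))ˣ where
  val := tMap n v
  inv := tMap n (-v)
  val_inv := by rw [tMap_mul, add_neg_cancel, tMap_zero]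
  inv_val := by rw [tMap_mul, neg_add_cancel, tMap_zero]

/-- Reflection `s_f` as an invertible endomorphism (junk value `1` if `⟨f,f⟩ = 0`). -/
def reflE (n : ℕ) (f : F n) : (Module.End ℝ (F n))ˣ :=
  if hf : bform n f f ≠ 0 then
    { val := reflMap n f
      inv := reflMap n f
      val_inv := by
        apply LinearMap.ext; intro g
        rw [Module.End.mul_apply, Module.End.one_apply]
        exact reflMap_invol n f hf g
      inv_val := by
        apply LinearMap.ext; intro g
        rw [Module.End.mul_apply, Module.End.one_apply]
        exact reflMap_invol n f hf g }
  else 1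

/-- The simple affine roots `a_0, a_1, …, a_n` of type `(C_n^∨, C_n)`:
`a_0 = −2ε_1 + c`, `a_j = ε_j − ε_{j+1}` for `1 ≤ j ≤ n−1`, `a_n = 2ε_n`. -/
def aRootF (n k : ℕ) : F n :=
  if k = 0 then (-(2:ℝ)) • eps n 1 + cvec n
  else if k = n then (2:ℝ) • eps n n
  else eps n k - eps n (k + 1)

/-- The generators `s_0, s_1, …, s_n` of the extended affine Weyl group of type
`(C_n^∨, C_n)`: `s_0 = t(ε_1) ∘ s_{2ε_1}` and `s_i = s_{a_i}` for `1 ≤ i ≤ n`. -/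
def sgen (n k : ℕ) : (Module.End ℝ (F n))ˣ :=
  if k = 0 then tU n (eps n 1).1 * reflE n ((2:ℝ) • eps n 1)
  else reflE n (aRootF n k)

/-- The finite Weyl group `W_0 = ⟨s_1, …, s_n⟩` of type `C_n`. -/
def W0grp (n : ℕ) : Subgroup (Module.End ℝ (F n))ˣ :=
  Subgroup.closure (sgen n '' Set.Icc 1 n)

/-- The extended affine Weyl group `W = ⟨s_0, s_1, …, s_n⟩` of type `(C_n^∨, C_n)`. -/
def Wgrp (n : ℕ) : Subgroup (Module.End ℝ (F n))ˣ :=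
  Subgroup.closure (sgen n '' Set.Icc 0 n)

/-- Product of the generators `s_k` along a list of indices. -/
def du (n : ℕ) (l : List ℕ) : (Module.End ℝ (F n))ˣ := (l.map (sgen n)).prod

/-- The weight lattice `P_{C_n} = ℤε_1 ⊕ ⋯ ⊕ ℤε_n` (as a subset of `ℝⁿ`). -/
def PC (n : ℕ) : Set (Fin n → ℝ) := { v | ∀ i, ∃ m : ℤ, v i = m }

/-- The weight lattice `P_{B_n} = P_{C_n} + ℤ·(1/2)(ε_1 + ⋯ + ε_n)` (as a subset of `ℝⁿ`). -/
def PB (n : ℕ) : Set (Fin n → ℝ) := { v | ∃ k : ℤ, ∀ i, ∃ m : ℤ, v i = m + (k : ℝ)/2 }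

/-- `O_1 = {±ε_i + rc}`. -/
def O1 (n : ℕ) : Set (F n) :=
  { x | ∃ i, 1 ≤ i ∧ i ≤ n ∧ ∃ r : ℤ,
      x = eps n i + (r : ℝ) • cvec n ∨ x = -eps n i + (r : ℝ) • cvec n }

/-- `O_2 = {±2ε_i + 2rc}`. -/
def O2 (n : ℕ) : Set (F n) :=
  { x | ∃ i, 1 ≤ i ∧ i ≤ n ∧ ∃ r : ℤ,
      x = (2:ℝ) • eps n i + ((2*r : ℤ) : ℝ) • cvec n ∨
      x = -((2:ℝ) • eps n i) + ((2*r : ℤ) : ℝ) • cvec n }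

/-- `O_3 = {±ε_i + (r + 1/2)c}`. -/
def O3 (n : ℕ) : Set (F n) :=
  { x | ∃ i, 1 ≤ i ∧ i ≤ n ∧ ∃ r : ℤ,
      x = eps n i + ((r : ℝ) + 1/2) • cvec n ∨
      x = -eps n i + ((r : ℝ) + 1/2) • cvec n }

/-- `O_4 = {±2ε_i + (2r+1)c}`. -/
def O4 (n : ℕ) : Set (F n) :=
  { x | ∃ i, 1 ≤ i ∧ i ≤ n ∧ ∃ r : ℤ,
      x = (2:ℝ) • eps n i + ((2*r+1 : ℤ) : ℝ) • cvec n ∨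
      x = -((2:ℝ) • eps n i) + ((2*r+1 : ℤ) : ℝ) • cvec n }

/-- `O_5 = {±ε_i ± ε_j + rc, i < j}`. -/
def O5 (n : ℕ) : Set (F n) :=
  { x | ∃ i j, 1 ≤ i ∧ i < j ∧ j ≤ n ∧ ∃ r : ℤ,
      x = eps n i + eps n j + (r : ℝ) • cvec n ∨
      x = eps n i - eps n j + (r : ℝ) • cvec n ∨
      x = -eps n i + eps n j + (r : ℝ) • cvec n ∨
      x = -eps n i - eps n j + (r : ℝ) • cvec n }

/-- The five `W`-orbits `O_1, …, O_5` of the affine root system of type `(C_n^∨, C_n)`. -/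
def OO (n : ℕ) : Fin 5 → Set (F n) := ![O1 n, O2 n, O3 n, O4 n, O5 n]

/-- The affine root system `S` of type `(C_n^∨, C_n)`. -/
def Sset (n : ℕ) : Set (F n) := O1 n ∪ O2 n ∪ O3 n ∪ O4 n ∪ O5 n

/-- The set `R̃₊ = {ε_i} ∪ {2ε_i} ∪ {ε_i ± ε_j : i < j}`. -/
def Rtplus (n : ℕ) : Set (F n) :=
  { x | (∃ i, 1 ≤ i ∧ i ≤ n ∧ (x = eps n i ∨ x = (2:ℝ) • eps n i)) ∨
        (∃ i j, 1 ≤ i ∧ i < j ∧ j ≤ n ∧ (x = eps n i + eps n j ∨ x = eps n i - eps n j)) }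

/-- The set of positive affine roots `S⁺`. -/
def Splus (n : ℕ) : Set (F n) :=
  { x ∈ Sset n | 0 < x.2 } ∪ (Sset n ∩ Rtplus n)

lemma sum_single_mul (n : ℕ) (j : Fin n) (v : Fin n → ℝ) :
    ∑ k, v k * (Pi.single j 1 : Fin n → ℝ) k = v j := by
  rw [Finset.sum_eq_single j]
  · simp
  · intro k _ hk
    simp [Pi.single_apply, hk]
  · intro h; exact absurd (Finset.mem_univ j) h

lemma bform_eps_right (n : ℕ) (x : F n) (i : ℕ) (h1 : 1 ≤ i) (h2 : i ≤ n) :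
    bform n x (eps n i) = x.1 ⟨i - 1, by omega⟩ := by
  unfold bform eps
  rw [dif_pos ⟨h1, h2⟩]
  exact sum_single_mul n _ x.1

lemma bform_eps_eps (n i : ℕ) (h1 : 1 ≤ i) (h2 : i ≤ n) :
    bform n (eps n i) (eps n i) = 1 := by
  rw [bform_eps_right n _ i h1 h2]
  unfold eps
  rw [dif_pos ⟨h1, h2⟩]
  simp

/-- `π^{C∨} = π^D`: the linear map with `ε_1 ↦ c − ε_1`, `ε_i ↦ ε_i` (`i ≥ 2`), `c ↦ c`. -/
def piCMap (n : ℕ) : Module.End ℝ (F n) where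
  toFun g := g - bform n g (eps n 1) • ((2:ℝ) • eps n 1 - cvec n)
  map_add' x y := by
    try dsimp only
    rw [bform_add_left, add_smul]; abel
  map_smul' c x := by
    try dsimp only
    simp only [RingHom.id_apply]
    rw [bform_smul_left, smul_sub c, smul_smul]

@[simp] lemma piCMap_apply (n : ℕ) (g : F n) :
    piCMap n g = g - bform n g (eps n 1) • ((2:ℝ) • eps n 1 - cvec n) := rfl

lemma piCMap_invol (n : ℕ) (g : F n) : piCMap n (piCMap n g) = g := by
  rcases Nat.eq_zero_or_pos n with h0 | hpos
  · subst h0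
    have he : eps 0 1 = 0 := by simp [eps]
    simp [piCMap_apply, he, bform]
  · have hE := bform_eps_eps n 1 le_rfl hpos
    have hc : bform n (cvec n) (eps n 1) = 0 := by simp [bform, cvec]
    simp only [piCMap_apply]
    rw [bform_sub_left, bform_smul_left, bform_sub_left, bform_smul_left, hE, hc]
    rw [sub_sub, ← add_smul]
    have key : bform n g (eps n 1) +
        (bform n g (eps n 1) - bform n g (eps n 1) * (2 * 1 - 0)) = 0 := by ring
    rw [key, zero_smul, sub_zero]

/-- `π^{C∨}` as an invertible endomorphism. -/
def piCU (n : ℕ) : (Module.End ℝ (F n))ˣ where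
  val := piCMap n
  inv := piCMap n
  val_inv := by
    apply LinearMap.ext; intro g
    rw [Module.End.mul_apply, Module.End.one_apply]
    exact piCMap_invol n g
  inv_val := by
    apply LinearMap.ext; intro g
    rw [Module.End.mul_apply, Module.End.one_apply]
    exact piCMap_invol n g

/-- `π^{B∨}`: the linear map with `ε_i ↦ (1/2)c − ε_{n−i+1}` and `c ↦ c`. -/
def piBMap (n : ℕ) : Module.End ℝ (F n) where
  toFun g := (fun i => -(g.1 (Fin.rev i)), g.2 + (1/2) * ∑ i, g.1 i)
  map_add' x y := by
    try dsimp only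
    refine Prod.ext ?_ ?_
    · funext i; simp [neg_add]; ring
    · simp [Finset.sum_add_distrib]; ring
  map_smul' c x := by
    try dsimp only
    simp only [RingHom.id_apply]
    refine Prod.ext ?_ ?_
    · funext i; simp [mul_comm]
    · simp only [Prod.smul_snd, Prod.smul_fst, Pi.smul_apply, smul_eq_mul, Finset.mul_sum,
        mul_add]
      congr 1
      exact Finset.sum_congr rfl fun i _ => by ring

@[simp] lemma piBMap_apply (n : ℕ) (g : F n) :
    piBMap n g = (fun i => -(g.1 (Fin.rev i)), g.2 + (1/2) * ∑ i, g.1 i) := rfl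

lemma piBMap_invol (n : ℕ) (g : F n) : piBMap n (piBMap n g) = g := by
  simp only [piBMap_apply]
  refine Prod.ext ?_ ?_
  · funext i; simp
  · have h : ∑ i, -(g.1 (Fin.rev i)) = -∑ i, g.1 i := by
      rw [← Finset.sum_neg_distrib]
      exact Equiv.sum_comp (Equiv.mk Fin.rev Fin.rev Fin.rev_rev Fin.rev_rev) (fun i => -(g.1 i))
    dsimp only
    rw [h]
    ring

/-- `π^{B∨}` as an invertible endomorphism. -/
def piBU (n : ℕ) : (Module.End ℝ (F n))ˣ where
  val := piBMap n
  inv := piBMap n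
  val_inv := by
    apply LinearMap.ext; intro g
    rw [Module.End.mul_apply, Module.End.one_apply]
    exact piBMap_invol n g
  inv_val := by
    apply LinearMap.ext; intro g
    rw [Module.End.mul_apply, Module.End.one_apply]
    exact piBMap_invol n g

/-- The affine root `a_0^{C∨} = −(ε_1 + ε_2) + c` of Ram–Yip type `C_n^∨`. -/
def a0C (n : ℕ) : F n := -(eps n 1 + eps n 2) + cvec n

/-- The reflection `s_0^{C∨} = s_{a_0^{C∨}}`. -/
def s0C (n : ℕ) : (Module.End ℝ (F n))ˣ := reflE n (a0C n)

/-- The extended affine Weyl group of Ram–Yip type `C_n^∨`: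
`W^{C∨,RY} = ⟨s_0^{C∨}, s_1, …, s_n, π^{C∨}⟩`. -/
def WCRY (n : ℕ) : Subgroup (Module.End ℝ (F n))ˣ :=
  Subgroup.closure ({s0C n, piCU n} ∪ sgen n '' Set.Icc 1 n)

/-- The extended affine Weyl group of Ram–Yip type `B_n^∨`:
`W^{B∨,RY} = ⟨s_0, s_1, …, s_n, π^{B∨}⟩`. -/
def WBRY (n : ℕ) : Subgroup (Module.End ℝ (F n))ˣ :=
  Subgroup.closure (insert (piBU n) (sgen n '' Set.Icc 0 n))

/-- The subgroup generated by `W_0` together with all the translations `t(μ)`, `μ ∈ P_{B_n}`. -/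
def WBtrans (n : ℕ) : Subgroup (Module.End ℝ (F n))ˣ :=
  Subgroup.closure ((sgen n '' Set.Icc 1 n) ∪ (tU n '' PB n))

/-- The defining relators of the extended affine Weyl group of type `(C_n^∨, C_n)`
on the generators `σ_0, …, σ_n`. -/
def rels (n : ℕ) : Set (FreeGroup (Fin (n + 1))) :=
  { r | (∃ i : Fin (n+1), r = FreeGroup.of i * FreeGroup.of i) ∨
        (∃ i j : Fin (n+1), ((i:ℕ) + 1 < (j:ℕ) ∨ (j:ℕ) + 1 < (i:ℕ)) ∧
          r = FreeGroup.of i * FreeGroup.of j * (FreeGroup.of i)⁻¹ * (FreeGroup.of j)⁻¹) ∨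
        (∃ i j : Fin (n+1), 1 ≤ (i:ℕ) ∧ (i:ℕ) ≤ n - 2 ∧ (j:ℕ) = (i:ℕ) + 1 ∧
          r = FreeGroup.of i * FreeGroup.of j * FreeGroup.of i *
              ((FreeGroup.of j)⁻¹ * (FreeGroup.of i)⁻¹ * (FreeGroup.of j)⁻¹)) ∨
        (∃ i j : Fin (n+1), ((i:ℕ) = 0 ∨ (i:ℕ) = n - 1) ∧ (j:ℕ) = (i:ℕ) + 1 ∧
          r = FreeGroup.of i * FreeGroup.of j * FreeGroup.of i * FreeGroup.of j *
              ((FreeGroup.of i)⁻¹ * (FreeGroup.of j)⁻¹ * (FreeGroup.of i)⁻¹ *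
                (FreeGroup.of j)⁻¹)) }

/-!
Write `v = s_{i-1} ⋯ s_1`, so that `s_{i-1} ⋯ s_1 s_0 = v t(ε_1) s_{2ε_1}`. Every element of `W_0`
fixes `c`, preserves the `c`-coordinate and the form, so `v` conjugates `t(ε_1)` into
`t(v ε_1) = t(ε_i)`; and `s_{2ε_1}` is the conjugate of `s_n = s_{2ε_n}` by `s_1 ⋯ s_{n-1}`, hence
lies in `W_0`.

For the lower bound, follow along a word the slot `a` that the word sends to `±ε_i + m c`.
Appending a generator moves the slot by at most one, and `m` can become nonzero only through `s_0`
acting on slot `1`, which takes at least `i - 1` earlier letters to reach. An element of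
`t(ε_i) W_0` sends the slot to `±(ε_i - c)`, since `W_0` preserves the `c`-coordinate; so `m ≠ 0`
and the word has at least `i` letters.
-/

lemma bform_comm (n : ℕ) (x y : F n) : bform n x y = bform n y x :=
  Finset.sum_congr rfl fun _ _ => mul_comm _ _

lemma bform_sub_right (n : ℕ) (x y z : F n) :
    bform n x (y - z) = bform n x y - bform n x z := by
  rw [bform_comm, bform_sub_left, bform_comm n y, bform_comm n z]

lemma bform_smul_right (n : ℕ) (c : ℝ) (x z : F n) :
    bform n x (c • z) = c * bform n x z := by
  rw [bform_comm, bform_smul_left, bform_comm]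

@[simp] lemma bform_cvec_left (n : ℕ) (x : F n) : bform n (cvec n) x = 0 := by
  simp [bform, cvec]

@[simp] lemma eps_snd (n a : ℕ) : (eps n a).2 = 0 := by
  unfold eps; split_ifs <;> rfl

lemma bform_eps_eps_of_ne (n : ℕ) {a b : ℕ} (h : a ≠ b) : bform n (eps n a) (eps n b) = 0 := by
  by_cases hb : 1 ≤ b ∧ b ≤ n
  · rw [bform_eps_right n _ b hb.1 hb.2]
    unfold eps
    split_ifs with ha
    · exact Pi.single_eq_of_ne (fun hab => h (by simp only [Fin.ext_iff] at hab; omega)) _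
    · rfl
  · simp [bform, eps, hb]

lemma tU_val_apply (n : ℕ) (x y : F n) : (tU n y.1).val x = x - bform n x y • cvec n := rfl

section Reflection

variable {n : ℕ} {f : F n}

lemma reflE_apply (hf : bform n f f ≠ 0) (x : F n) :
    (reflE n f).val x = x - ((2 / bform n f f) * bform n x f) • f := by
  simp [reflE, hf]

lemma reflE_apply_of_bform_eq_zero {x : F n} (h : bform n x f = 0) : (reflE n f).val x = x := by
  unfold reflE
  split_ifs
  · simp [h]
  · rfl

lemma reflE_cvec : (reflE n f).val (cvec n) = cvec n :=
  reflE_apply_of_bform_eq_zero (bform_cvec_left n f)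

lemma reflE_apply_snd (hf : f.2 = 0) (x : F n) : ((reflE n f).val x).2 = x.2 := by
  unfold reflE
  split_ifs
  · simp [hf]
  · rfl

lemma bform_reflE_reflE (x y : F n) :
    bform n ((reflE n f).val x) ((reflE n f).val y) = bform n x y := by
  by_cases hf : bform n f f = 0
  · simp [reflE, hf]
  simp only [reflE_apply hf, bform_sub_left, bform_sub_right, bform_smul_left, bform_smul_right,
    bform_comm n f]
  field_simp
  ring

lemma mul_reflE {g : (Module.End ℝ (F n))ˣ}
    (hg : ∀ x y, bform n (g.val x) (g.val y) = bform n x y) :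
    g * reflE n f = reflE n (g.val f) * g := by
  by_cases hf : bform n f f = 0
  · simp [reflE, hf, hg]
  have hgf : bform n (g.val f) (g.val f) ≠ 0 := by rwa [hg]
  refine Units.ext (LinearMap.ext fun x => ?_)
  simp only [Units.val_mul, Module.End.mul_apply, reflE_apply hf, reflE_apply hgf, map_sub,
    map_smul, hg]

end Reflection

section Generators

variable {n : ℕ}

lemma sgen_of_ne_zero {k : ℕ} (hk : k ≠ 0) : sgen n k = reflE n (aRootF n k) := by
  simp [sgen, hk]

lemma sgen_cvec (k : ℕ) : (sgen n k).val (cvec n) = cvec n := by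
  unfold sgen
  split_ifs
  · simp [tU_val_apply, reflE_cvec]
  · exact reflE_cvec

lemma sgen_apply_snd {k : ℕ} (hk : k ≠ 0) (x : F n) : ((sgen n k).val x).2 = x.2 := by
  rw [sgen_of_ne_zero hk]
  refine reflE_apply_snd ?_ x
  simp only [aRootF, hk, if_false]
  split_ifs <;> simp

lemma sgen_zero_eps_one (hn : 1 ≤ n) : (sgen n 0).val (eps n 1) = -eps n 1 + cvec n := by
  have h4 : bform n ((2 : ℝ) • eps n 1) ((2 : ℝ) • eps n 1) = 4 := by
    simp only [bform_smul_left, bform_smul_right, bform_eps_eps n 1 le_rfl hn]; norm_num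
  simp only [sgen, if_true, Units.val_mul, Module.End.mul_apply,
    reflE_apply (by rw [h4]; norm_num), h4, tU_val_apply, bform_sub_left, bform_smul_left,
    bform_smul_right, bform_eps_eps n 1 le_rfl hn]
  module

lemma sgen_zero_eps_of_ne {a : ℕ} (ha : a ≠ 1) : (sgen n 0).val (eps n a) = eps n a := by
  simp [sgen, tU_val_apply, reflE_apply_of_bform_eq_zero, bform_smul_right,
    bform_eps_eps_of_ne n ha]

lemma sgen_last_eps_last (hn : n ≠ 0) : (sgen n n).val (eps n n) = -eps n n := by
  have h4 : bform n ((2 : ℝ) • eps n n) ((2 : ℝ) • eps n n) = 4 := by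
    simp only [bform_smul_left, bform_smul_right, bform_eps_eps n n (by omega) le_rfl]; norm_num
  rw [sgen_of_ne_zero hn]
  simp only [aRootF, hn, if_false, if_true, reflE_apply (by rw [h4]; norm_num), h4,
    bform_smul_right, bform_eps_eps n n (by omega) le_rfl]
  module

lemma sgen_last_eps_of_ne (hn : n ≠ 0) {a : ℕ} (ha : a ≠ n) :
    (sgen n n).val (eps n a) = eps n a := by
  rw [sgen_of_ne_zero hn]
  simp [aRootF, hn, reflE_apply_of_bform_eq_zero, bform_smul_right, bform_eps_eps_of_ne n ha]

section Middle

variable {k : ℕ}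

lemma aRootF_of_lt (hk : 1 ≤ k) (hkn : k < n) : aRootF n k = eps n k - eps n (k + 1) := by
  simp [aRootF, show k ≠ 0 by omega, show k ≠ n by omega]

lemma bform_aRootF_self_of_lt (hk : 1 ≤ k) (hkn : k < n) :
    bform n (aRootF n k) (aRootF n k) = 2 := by
  simp only [aRootF_of_lt hk hkn, bform_sub_left, bform_sub_right, bform_eps_eps n k hk hkn.le,
    bform_eps_eps n (k + 1) (by omega) hkn, bform_eps_eps_of_ne n (show k ≠ k + 1 by omega),
    bform_eps_eps_of_ne n (show k + 1 ≠ k by omega)]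
  norm_num

lemma sgen_eps_self (hk : 1 ≤ k) (hkn : k < n) : (sgen n k).val (eps n k) = eps n (k + 1) := by
  rw [sgen_of_ne_zero (by omega), reflE_apply (by rw [bform_aRootF_self_of_lt hk hkn]; norm_num),
    bform_aRootF_self_of_lt hk hkn, aRootF_of_lt hk hkn]
  simp only [bform_sub_right, bform_eps_eps n k hk hkn.le,
    bform_eps_eps_of_ne n (show k ≠ k + 1 by omega)]
  module

lemma sgen_eps_succ (hk : 1 ≤ k) (hkn : k < n) : (sgen n k).val (eps n (k + 1)) = eps n k := by
  rw [sgen_of_ne_zero (by omega), reflE_apply (by rw [bform_aRootF_self_of_lt hk hkn]; norm_num),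
    bform_aRootF_self_of_lt hk hkn, aRootF_of_lt hk hkn]
  simp only [bform_sub_right, bform_eps_eps n (k + 1) (by omega) hkn,
    bform_eps_eps_of_ne n (show k + 1 ≠ k by omega)]
  module

lemma sgen_eps_of_ne (hk : 1 ≤ k) (hkn : k < n) {a : ℕ} (ha : a ≠ k) (ha' : a ≠ k + 1) :
    (sgen n k).val (eps n a) = eps n a := by
  rw [sgen_of_ne_zero (by omega), aRootF_of_lt hk hkn]
  exact reflE_apply_of_bform_eq_zero (by
    rw [bform_sub_right, bform_eps_eps_of_ne n ha, bform_eps_eps_of_ne n ha', sub_zero])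

end Middle

end Generators

def levelIsometries (n : ℕ) : Subgroup (Module.End ℝ (F n))ˣ where
  carrier := {g | g.val (cvec n) = cvec n ∧ (∀ x, (g.val x).2 = x.2) ∧
    ∀ x y, bform n (g.val x) (g.val y) = bform n x y}
  one_mem' := ⟨rfl, fun _ => rfl, fun _ _ => rfl⟩
  mul_mem' := by
    rintro g h ⟨hgc, hg2, hgb⟩ ⟨hhc, hh2, hhb⟩
    exact ⟨by simp [hhc, hgc], fun x => by simp [hg2, hh2], fun x y => by simp [hgb, hhb]⟩
  inv_mem' := by
    rintro g ⟨hgc, hg2, hgb⟩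
    refine ⟨?_, fun x => ?_, fun x y => ?_⟩
    · conv_lhs => rw [← hgc]
      exact inv_smul_smul g _
    · rw [← hg2]; exact congrArg Prod.snd (smul_inv_smul g x)
    · rw [← hgb]; exact congrArg₂ (bform n) (smul_inv_smul g x) (smul_inv_smul g y)

lemma W0grp_le_levelIsometries (n : ℕ) : W0grp n ≤ levelIsometries n := by
  refine Subgroup.closure_le _ |>.mpr ?_
  rintro _ ⟨k, hk, rfl⟩
  have hk0 : k ≠ 0 := by have := hk.1; omega
  refine ⟨sgen_cvec k, sgen_apply_snd hk0, ?_⟩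
  rw [sgen_of_ne_zero hk0]
  exact bform_reflE_reflE

lemma mul_tU_of_mem_levelIsometries {n : ℕ} {g : (Module.End ℝ (F n))ˣ}
    (hg : g ∈ levelIsometries n) (x : F n) : g * tU n x.1 = tU n (g.val x).1 * g := by
  obtain ⟨hgc, -, hgb⟩ := hg
  refine Units.ext (LinearMap.ext fun y => ?_)
  simp only [Units.val_mul, Module.End.mul_apply, tU_val_apply, map_sub, map_smul, hgc, hgb]

section Words

variable {n : ℕ}

lemma du_cons (k : ℕ) (L : List ℕ) : du n (k :: L) = sgen n k * du n L := by
  simp [du]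

lemma du_concat (L : List ℕ) (k : ℕ) : du n (L ++ [k]) = du n L * sgen n k := by
  simp [du]

lemma du_mem_W0grp {L : List ℕ} (hL : ∀ k ∈ L, 1 ≤ k ∧ k ≤ n) : du n L ∈ W0grp n := by
  refine list_prod_mem fun _ hx => ?_
  obtain ⟨k, hk, rfl⟩ := List.mem_map.mp hx
  exact Subgroup.subset_closure ⟨k, hL k hk, rfl⟩

lemma du_cvec (L : List ℕ) : (du n L).val (cvec n) = cvec n := by
  induction L with
  | nil => rfl
  | cons k L ih => rw [du_cons, Units.val_mul, Module.End.mul_apply, ih, sgen_cvec]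

lemma exists_eps_image_mul_sgen (hn : 1 ≤ n) {u : (Module.End ℝ (F n))ˣ}
    (hu : u.val (cvec n) = cvec n) {k : ℕ} (hk : k ≤ n) {j a : ℕ} {σ m : ℝ}
    (h : u.val (eps n a) = σ • eps n j + m • cvec n) :
    ∃ a' : ℕ, ∃ σ' m' : ℝ, (u * sgen n k).val (eps n a') = σ' • eps n j + m' • cvec n ∧
      (σ' = σ ∨ σ' = -σ) ∧ a ≤ a' + 1 ∧ (m' ≠ 0 → m ≠ 0 ∨ a = 1) := by
  simp only [Units.val_mul, Module.End.mul_apply]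
  have of_fixed : (sgen n k).val (eps n a) = eps n a →
      ∃ a' : ℕ, ∃ σ' m' : ℝ, u.val ((sgen n k).val (eps n a')) = σ' • eps n j + m' • cvec n ∧
        (σ' = σ ∨ σ' = -σ) ∧ a ≤ a' + 1 ∧ (m' ≠ 0 → m ≠ 0 ∨ a = 1) :=
    fun hs => ⟨a, σ, m, by rw [hs, h], Or.inl rfl, by omega, Or.inl⟩
  rcases Nat.eq_zero_or_pos k with rfl | hk0
  · by_cases ha : a = 1
    · subst ha
      refine ⟨1, -σ, 1 - m, ?_, Or.inr rfl, by omega, fun _ => Or.inr rfl⟩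
      rw [sgen_zero_eps_one hn, map_add, map_neg, h, hu]
      module
    · exact of_fixed (sgen_zero_eps_of_ne ha)
  rcases hk.lt_or_eq with hkn | rfl
  · by_cases ha : a = k
    · subst ha
      exact ⟨a + 1, σ, m, by rw [sgen_eps_succ hk0 hkn, h], Or.inl rfl, by omega, Or.inl⟩
    by_cases ha' : a = k + 1
    · subst ha'
      exact ⟨k, σ, m, by rw [sgen_eps_self hk0 hkn, h], Or.inl rfl, le_rfl, Or.inl⟩
    · exact of_fixed (sgen_eps_of_ne hk0 hkn ha ha')
  · by_cases ha : a = k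
    · subst ha
      refine ⟨a, -σ, -m, ?_, Or.inr rfl, by omega, fun hm => Or.inl (neg_ne_zero.mp hm)⟩
      rw [sgen_last_eps_last hk0.ne', map_neg, h]
      module
    · exact of_fixed (sgen_last_eps_of_ne hk0.ne' ha)

lemma exists_eps_image_du (hn : 1 ≤ n) (j : ℕ) {L : List ℕ} (hL : ∀ k ∈ L, k ≤ n) :
    ∃ a : ℕ, ∃ σ m : ℝ, σ ≠ 0 ∧ (du n L).val (eps n a) = σ • eps n j + m • cvec n ∧
      j ≤ L.length + a ∧ (m ≠ 0 → j ≤ L.length) := by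
  induction L using List.reverseRecOn with
  | nil => exact ⟨j, 1, 0, one_ne_zero, by simp [du], by simp, fun h => absurd rfl h⟩
  | append_singleton L k ih =>
    obtain ⟨a, σ, m, hσ, h, hja, hjm⟩ := ih fun k hk => hL k (by simp [hk])
    obtain ⟨a', σ', m', h', hσ', haa', hm'⟩ :=
      exists_eps_image_mul_sgen hn (du_cvec L) (hL k (by simp)) h
    simp only [List.length_append, List.length_singleton]
    refine ⟨a', σ', m', by rcases hσ' with rfl | rfl <;> simpa, by rwa [du_concat], by omega,
      fun hm => ?_⟩
    rcases hm' hm with hm | rfl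
    · have := hjm hm; omega
    · omega

lemma le_length_of_du_eq_tU_mul {j : ℕ} (hj1 : 1 ≤ j) (hjn : j ≤ n) {L : List ℕ}
    (hL : ∀ k ∈ L, k ≤ n) {w : (Module.End ℝ (F n))ˣ} (hw : w ∈ W0grp n)
    (h : du n L = tU n (eps n j).1 * w) : j ≤ L.length := by
  obtain ⟨a, σ, m, hσ, ha, -, hm⟩ := exists_eps_image_du (hj1.trans hjn) j hL
  refine hm fun hm0 => hσ ?_
  have hy : (w.val (eps n a)).2 = 0 := by rw [(W0grp_le_levelIsometries n hw).2.1, eps_snd]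
  rw [h, Units.val_mul, Module.End.mul_apply, tU_val_apply] at ha
  have h2 := congrArg Prod.snd ha
  have hb := congrArg (bform n · (eps n j)) ha
  simp only [Prod.snd_sub, Prod.snd_add, Prod.smul_snd, hy, eps_snd, hm0, cvec, smul_eq_mul,
    mul_zero, mul_one, add_zero, zero_sub, neg_eq_zero] at h2
  simp only [bform_sub_left, bform_add_left, bform_smul_left, bform_cvec_left,
    bform_eps_eps n j hj1 hjn, mul_zero, mul_one, sub_zero, add_zero] at hb
  rw [← hb, h2]

end Words

section Representative

variable {n : ℕ}

lemma du_reverse_range'_eps_one {m : ℕ} (hm : m + 1 ≤ n) :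
    (du n (List.range' 1 m).reverse).val (eps n 1) = eps n (m + 1) := by
  induction m with
  | zero => rfl
  | succ m ih =>
    rw [List.range'_concat, List.reverse_append, List.reverse_singleton, List.singleton_append,
      du_cons, Units.val_mul, Module.End.mul_apply, ih (by omega), one_mul, add_comm 1 m,
      sgen_eps_self (by omega) (by omega)]

lemma du_range'_eps {k m : ℕ} (hk : 1 ≤ k) (hkm : k + m ≤ n) :
    (du n (List.range' k m)).val (eps n (k + m)) = eps n k := by
  induction m generalizing k with
  | zero => rfl
  | succ m ih =>
    rw [List.range'_succ, du_cons, Units.val_mul, Module.End.mul_apply,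
      show k + (m + 1) = k + 1 + m by omega, ih (by omega) (by omega),
      sgen_eps_succ hk (by omega)]

lemma reflE_two_smul_eps_one_mem_W0grp (hn : 1 ≤ n) : reflE n ((2 : ℝ) • eps n 1) ∈ W0grp n := by
  set g := du n (List.range' 1 (n - 1))
  have hg : g ∈ W0grp n := du_mem_W0grp fun k hk => by rw [List.mem_range'_1] at hk; omega
  have hgn : g.val (eps n n) = eps n 1 := by
    simpa [show 1 + (n - 1) = n by omega] using
      du_range'_eps (n := n) le_rfl (m := n - 1) (by omega)
  have hsn : sgen n n = reflE n ((2 : ℝ) • eps n n) := by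
    simp [sgen_of_ne_zero (show n ≠ 0 by omega), aRootF, show n ≠ 0 by omega]
  have hconj := mul_reflE (f := (2 : ℝ) • eps n n) (W0grp_le_levelIsometries n hg).2.2
  rw [map_smul, hgn, ← hsn] at hconj
  rw [← mul_inv_eq_of_eq_mul hconj]
  exact mul_mem (mul_mem hg (Subgroup.subset_closure ⟨n, ⟨by omega, le_rfl⟩, rfl⟩)) (inv_mem hg)

lemma exists_du_reverse_range_eq_tU_mul {i : ℕ} (h1 : 1 ≤ i) (h2 : i ≤ n) :
    ∃ w ∈ W0grp n, du n (List.range i).reverse = tU n (eps n i).1 * w := by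
  obtain ⟨i, rfl⟩ : ∃ i', i = i' + 1 := ⟨i - 1, by omega⟩
  set v := du n (List.range' 1 i).reverse
  have hv : v ∈ W0grp n := du_mem_W0grp fun k hk => by
    rw [List.mem_reverse, List.mem_range'_1] at hk; omega
  refine ⟨v * reflE n ((2 : ℝ) • eps n 1),
    mul_mem hv (reflE_two_smul_eps_one_mem_W0grp (h1.trans h2)), ?_⟩
  rw [List.range_eq_range', List.range'_succ, List.reverse_cons, du_concat, zero_add, sgen,
    if_pos rfl, ← mul_assoc, mul_tU_of_mem_levelIsometries (W0grp_le_levelIsometries n hv),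
    du_reverse_range'_eps_one h2, mul_assoc]

end Representative

theorem shortest_coset_representative_general (n : ℕ)
    (i : ℕ) (h1 : 1 ≤ i) (h2 : i ≤ n) :
    (∃ w ∈ W0grp n, du n ((List.range i).reverse) = tU n (eps n i).1 * w) ∧
    (∀ L : List ℕ, (∀ k ∈ L, k ≤ n) →
      (∃ w ∈ W0grp n, du n L = tU n (eps n i).1 * w) → i ≤ L.length) :=
  ⟨exists_du_reverse_range_eq_tU_mul h1 h2,
    fun _ hL ⟨_, hw, h⟩ => le_length_of_du_eq_tU_mul h1 h2 hL hw h⟩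

/-- `w(ε_i) = s_{i−1} ⋯ s_1 s_0` lies in the coset `t(ε_i)·W_0`, and is a
shortest element of that coset: any word in `s_0, …, s_n` lying in `t(ε_i)·W_0` has length
at least `i`. -/
theorem shortest_coset_representative (n : ℕ) (hn : 2 ≤ n)
    (i : ℕ) (h1 : 1 ≤ i) (h2 : i ≤ n) :
    (∃ w ∈ W0grp n, du n ((List.range i).reverse) = tU n (eps n i).1 * w) ∧
    (∀ L : List ℕ, (∀ k ∈ L, k ≤ n) →
      (∃ w ∈ W0grp n, du n L = tU n (eps n i).1 * w) → i ≤ L.length) :=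
  shortest_coset_representative_general n i h1 h2

end CvC
end
end

section
/- Let A = {x ∈ ℝⁿ : 1/2 > x_1 > x_2 > ⋯ > x_n > 0} be the open fundamental alcove of type (C_n^∨, C_n), and let σ_0 : ℝⁿ → ℝⁿ be the affine reflection σ_0(x) = (1 − x_1, x_2, …, x_n). Then the closed fundamental alcove of Ram–Yip type C_n^∨, namely A^{C∨,RY} = {x ∈ ℝⁿ : x_1 + x_2 ≤ 1 and x_1 ≥ x_2 ≥ ⋯ ≥ x_n ≥ 0}, equals the topological closure of A ∪ σ_0(A). -/
theorem aux_mem_closure (n : ℕ) (hn : 1 < n) (x : Fin n → ℝ)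
    (h1 : 0 ≤ 1 - 2 * x ⟨0, by omega⟩)
    (h2 : ∀ j : ℕ, (hj : j + 1 < n) → 0 ≤ x ⟨j, Nat.lt_of_succ_lt hj⟩ - x ⟨j + 1, hj⟩)
    (h3 : 0 ≤ x ⟨n - 1, by omega⟩) :
    x ∈ closure {x : Fin n → ℝ |
          0 < 1 - 2 * x ⟨0, by omega⟩ ∧
          (∀ j : ℕ, (hj : j + 1 < n) → 0 < x ⟨j, Nat.lt_of_succ_lt hj⟩ - x ⟨j + 1, hj⟩) ∧
          0 < 2 * x ⟨n - 1, by omega⟩} := by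
  set d : ℝ := 1 / (2 * (n + 1)) with hdd
  have hd : 0 < d := by positivity
  have hd2 : 2 * ((n : ℝ) + 1) * d = 1 := by
    rw [hdd]; field_simp
  set p : Fin n → ℝ := fun i => ((n : ℝ) - (i : ℕ)) * d with hp
  apply mem_closure_of_tendsto (f := fun t : ℝ => fun i => x i + t * (p i - x i))
    (b := nhdsWithin 0 (Set.Ioi 0))
  · have hc : Continuous (fun t : ℝ => fun i : Fin n => x i + t * (p i - x i)) := by
      apply continuous_pi; intro i; fun_prop
    have := (hc.tendsto 0).mono_left (nhdsWithin_le_nhds (s := Set.Ioi 0))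
    simpa using this
  · filter_upwards [Ioo_mem_nhdsGT_of_mem (by norm_num : (0:ℝ) ∈ Set.Ico 0 1)] with t ht
    obtain ⟨ht0, ht1⟩ := ht
    refine ⟨?_, ?_, ?_⟩
    · have hp0 : p ⟨0, by omega⟩ = (n : ℝ) * d := by simp [hp]
      simp only [hp0]
      nlinarith [mul_pos ht0 hd, mul_nonneg (by linarith : (0:ℝ) ≤ 1 - t) h1]
    · intro j hj
      have hpj : p ⟨j, by omega⟩ - p ⟨j + 1, hj⟩ = d := by
        simp only [hp]; push_cast; ring
      have := h2 j hj
      nlinarith [mul_pos ht0 hd, mul_nonneg (by linarith : (0:ℝ) ≤ 1 - t) this]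
    · have hpn : p ⟨n - 1, by omega⟩ = d := by
        simp only [hp]
        have : ((n - 1 : ℕ) : ℝ) = (n : ℝ) - 1 := by
          push_cast [Nat.cast_sub (by omega : 1 ≤ n)]; ring
        rw [this]; ring
      nlinarith [mul_pos ht0 hd, mul_nonneg (by linarith : (0:ℝ) ≤ 1 - t) h3]

def sigma0 (n : ℕ) (h : 0 < n) : (Fin n → ℝ) → Fin n → ℝ :=
  fun x => Function.update x ⟨0, h⟩ (1 - x ⟨0, h⟩)

set_option maxHeartbeats 4000000 in
/-- the closed fundamental alcove of Ram–Yip type `C_n^∨` equals the closure of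
`A ∪ σ_0(A)`, where `A` is the open fundamental alcove of type `(C_n^∨, C_n)` and `σ_0` is the
affine reflection across the hyperplane `x_1 = 1/2`. -/
theorem alcove_CRY_eq_closure (n : ℕ) (hn : 2 ≤ n) :
    closure
      ({x : Fin n → ℝ |
          0 < 1 - 2 * x ⟨0, by omega⟩ ∧
          (∀ j : ℕ, (hj : j + 1 < n) → 0 < x ⟨j, by omega⟩ - x ⟨j + 1, hj⟩) ∧
          0 < 2 * x ⟨n - 1, by omega⟩} ∪
        (fun x : Fin n → ℝ => Function.update x ⟨0, by omega⟩ (1 - x ⟨0, by omega⟩)) ''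
          {x : Fin n → ℝ |
            0 < 1 - 2 * x ⟨0, by omega⟩ ∧
            (∀ j : ℕ, (hj : j + 1 < n) → 0 < x ⟨j, by omega⟩ - x ⟨j + 1, hj⟩) ∧
            0 < 2 * x ⟨n - 1, by omega⟩})
      = {x : Fin n → ℝ |
          0 ≤ 1 - x ⟨0, by omega⟩ - x ⟨1, by omega⟩ ∧
          (∀ j : ℕ, (hj : j + 1 < n) → 0 ≤ x ⟨j, by omega⟩ - x ⟨j + 1, hj⟩) ∧
          0 ≤ x ⟨n - 1, by omega⟩} := by
  have h0n : (0:ℕ) < n := by omega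
  set i0 : Fin n := ⟨0, by omega⟩ with hi0
  set i1 : Fin n := ⟨1, by omega⟩ with hi1
  set iN : Fin n := ⟨n - 1, by omega⟩ with hiN
  set A : Set (Fin n → ℝ) := {x : Fin n → ℝ |
          0 < 1 - 2 * x ⟨0, by omega⟩ ∧
          (∀ j : ℕ, (hj : j + 1 < n) → 0 < x ⟨j, by omega⟩ - x ⟨j + 1, hj⟩) ∧
          0 < 2 * x ⟨n - 1, by omega⟩} with hA
  have hAg : ((fun x : Fin n → ℝ => Function.update x ⟨0, by omega⟩ (1 - x ⟨0, by omega⟩)) '' A)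
      = sigma0 n h0n '' A := rfl
  rw [hAg]
  have hg0 : ∀ x : Fin n → ℝ, sigma0 n h0n x i0 = 1 - x i0 := fun x => by
    simp [sigma0, hi0]
  have hgj : ∀ (x : Fin n → ℝ) (i : Fin n), i ≠ i0 → sigma0 n h0n x i = x i := fun x i hi => by
    exact Function.update_of_ne hi _ _
  have hgc : Continuous (sigma0 n h0n) := by
    apply continuous_pi
    intro i
    by_cases hi : i = i0
    · subst hi
      simp only [sigma0, hi0, Function.update_self]
      fun_prop
    · simp only [sigma0, Function.update_of_ne hi]
      fun_prop
  have hgg : ∀ x : Fin n → ℝ, sigma0 n h0n (sigma0 n h0n x) = x := by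
    intro x
    funext i
    by_cases hi : i = i0
    · subst hi; rw [hg0, hg0]; ring
    · rw [hgj _ _ hi, hgj _ _ hi]
  have hN0 : iN ≠ i0 := by simp [hiN, hi0, Fin.ext_iff]; omega
  have h10 : i1 ≠ i0 := by simp [hi1, hi0, Fin.ext_iff]
  apply subset_antisymm
  · -- closure (A ∪ g '' A) ⊆ C
    apply closure_minimal
    · rintro x (hx | ⟨y, hy, rfl⟩)
      · obtain ⟨hx1, hx2, hx3⟩ := hx
        have h01 := hx2 0 (by omega)
        exact ⟨by linarith, fun j hj => (hx2 j hj).le, by linarith⟩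
      · obtain ⟨hy1, hy2, hy3⟩ := hy
        have h01 := hy2 0 (by omega)
        refine ⟨?_, ?_, ?_⟩
        · show (0:ℝ) ≤ 1 - sigma0 n h0n y i0 - sigma0 n h0n y i1
          rw [hg0, hgj _ _ h10]
          linarith
        · intro j hj
          rcases Nat.eq_zero_or_pos j with rfl | hjpos
          · show (0:ℝ) ≤ sigma0 n h0n y i0 - sigma0 n h0n y i1
            rw [hg0, hgj _ _ h10]
            linarith
          · have hj' : (⟨j, by omega⟩ : Fin n) ≠ i0 := by simp [hi0, Fin.ext_iff]; omega
            have hj'' : (⟨j + 1, hj⟩ : Fin n) ≠ i0 := by simp [hi0, Fin.ext_iff]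
            rw [hgj _ _ hj', hgj _ _ hj'']
            exact (hy2 j hj).le
        · show (0:ℝ) ≤ sigma0 n h0n y iN
          rw [hgj _ _ hN0]
          linarith
    · -- C is closed
      have : {x : Fin n → ℝ |
          0 ≤ 1 - x ⟨0, by omega⟩ - x ⟨1, by omega⟩ ∧
          (∀ j : ℕ, (hj : j + 1 < n) → 0 ≤ x ⟨j, by omega⟩ - x ⟨j + 1, hj⟩) ∧
          0 ≤ x ⟨n - 1, by omega⟩} =
          {x : Fin n → ℝ | 0 ≤ 1 - x i0 - x i1} ∩
          ((⋂ j : ℕ, ⋂ hj : j + 1 < n, {x : Fin n → ℝ | 0 ≤ x ⟨j, by omega⟩ - x ⟨j + 1, hj⟩}) ∩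
            {x : Fin n → ℝ | 0 ≤ x iN}) := by
        ext x
        simp only [Set.mem_setOf_eq, Set.mem_inter_iff, Set.mem_iInter]
        exact Iff.rfl
      rw [this]
      refine IsClosed.inter ?_ (IsClosed.inter ?_ ?_)
      · exact isClosed_le continuous_const (by fun_prop)
      · exact isClosed_iInter fun j => isClosed_iInter fun hj =>
          isClosed_le continuous_const (by fun_prop)
      · exact isClosed_le continuous_const (by fun_prop)
  · -- C ⊆ closure (A ∪ g '' A)
    rintro x ⟨hx1, hx2, hx3⟩
    by_cases hhalf : x i0 ≤ 1 / 2
    · have hxA : x ∈ closure A := by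
        apply aux_mem_closure n hn x
        · show (0:ℝ) ≤ 1 - 2 * x i0; linarith
        · exact hx2
        · exact hx3
      exact closure_mono Set.subset_union_left hxA
    · push_neg at hhalf
      have hzA : sigma0 n h0n x ∈ closure A := by
        apply aux_mem_closure n hn (sigma0 n h0n x)
        · show (0:ℝ) ≤ 1 - 2 * sigma0 n h0n x i0
          rw [hg0]; linarith
        · intro j hj
          rcases Nat.eq_zero_or_pos j with rfl | hjpos
          · show (0:ℝ) ≤ sigma0 n h0n x i0 - sigma0 n h0n x i1
            rw [hg0, hgj _ _ h10]
            linarith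
          · have hj' : (⟨j, by omega⟩ : Fin n) ≠ i0 := by simp [hi0, Fin.ext_iff]; omega
            have hj'' : (⟨j + 1, hj⟩ : Fin n) ≠ i0 := by simp [hi0, Fin.ext_iff]
            rw [hgj _ _ hj', hgj _ _ hj'']
            exact hx2 j hj
        · show (0:ℝ) ≤ sigma0 n h0n x iN
          rw [hgj _ _ hN0]
          exact hx3
      have : x ∈ sigma0 n h0n '' closure A := ⟨sigma0 n h0n x, hzA, hgg x⟩
      have hx' : x ∈ closure (sigma0 n h0n '' A) := image_closure_subset_closure_image hgc this
      exact closure_mono Set.subset_union_right hx'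
end
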